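/- Let (x^k), (λ^{ν,k}), (μ^{ν,k}), (u^{ν,k}), (ρ_{ν,k}) be generated by the augmented Lagrangian method (Algorithm 3.1) applied to the partially penalized GNEP, under Assumption 3.2 with (ε_k) bounded and ε'_k → 0. Let K ⊆ ℕ and x̄ be such that x^{k+1} → x̄ along k ∈ K. Then for every player ν there exist multipliers μ̂^{ν,k+1} ∈ ℝ^{p_ν}, k ∈ K, such that ∇_{x^ν}‖g_+^ν(x^{k+1})‖² + ∇_{x^ν}h^ν(x^{k+1}) μ̂^{ν,k+1} → 0 and min{−h^ν(x^{k+1}), μ̂^{ν,k+1}} → 0 along k ∈ K; that is, the iterates satisfy an approximate KKT condition for the Feasibility GNEP. -/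

import Mathlib

open Filter Topology Finset Function RealInnerProductSpace

/-- The strategy space of a GNEP: one Euclidean block per player. -/
abbrev Strat {N : ℕ} (n : Fin N → ℕ) := (ν : Fin N) → EuclideanSpace ℝ (Fin (n ν))

/-- Partial gradient of `f : Strat n → ℝ` with respect to player `ν`'s block at `x`. -/
noncomputable def pgrad {N : ℕ} {n : Fin N → ℕ} (ν : Fin N)
    (f : Strat n → ℝ) (x : Strat n) : EuclideanSpace ℝ (Fin (n ν)) :=
  gradient (fun z => f (Function.update x ν z)) (x ν)

/-- Positive linear dependence of a family on a finite index set. -/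
def PosLinDep {ι E : Type*} [AddCommGroup E] [Module ℝ E]
    (s : Finset ι) (v : ι → E) : Prop :=
  ∃ a : ι → ℝ, (∀ i, 0 ≤ a i) ∧ (∃ i ∈ s, a i ≠ 0) ∧ ∑ i ∈ s, a i • v i = 0

/-- Linear dependence of a family on a finite index set. -/
def LinDep {ι E : Type*} [AddCommGroup E] [Module ℝ E]
    (s : Finset ι) (v : ι → E) : Prop :=
  ∃ a : ι → ℝ, (∃ i ∈ s, a i ≠ 0) ∧ ∑ i ∈ s, a i • v i = 0

/-- CPLD with respect to player `ν`. -/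
def CPLDnu {N : ℕ} {n : Fin N → ℕ} {ι : Type*} (ν : Fin N)
    (c : ι → Strat n → ℝ) (x : Strat n) : Prop :=
  ∀ I : Finset ι, (∀ i ∈ I, c i x = 0) →
    PosLinDep I (fun i => pgrad ν (c i) x) →
    ∃ U ∈ 𝓝 x, ∀ y ∈ U, LinDep I (fun i => pgrad ν (c i) y)

/-- EMFCQ with respect to player `ν`. -/
def EMFCQnu {N : ℕ} {n : Fin N → ℕ} {ι : Type*} (ν : Fin N)
    (c : ι → Strat n → ℝ) (x : Strat n) : Prop :=
  ∃ d : EuclideanSpace ℝ (Fin (n ν)), ∀ i, 0 ≤ c i x → inner (𝕜 := ℝ) (pgrad ν (c i) x) d < 0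

/-!
Fix a player `ν`. If the penalty parameter `ρ_ν` stays bounded, the complementarity residual
`‖min(-g, λ)‖` eventually contracts by the factor `τ_ν`, so `g⁺(x^{k+1}) → 0` and with it
`∇‖g⁺‖² → 0`: the multipliers `μ̂ = 0` work. Otherwise `ρ_ν → ∞`, and dividing the approximate
stationarity of the augmented Lagrangian by `ρ_ν / 2` gives stationarity of the Feasibility GNEP
with `μ̂ = (2 / ρ_ν) μ`, because the coefficients `(2 / ρ_ν) λ` differ from `2 g⁺` by at most
`2 u^max / ρ_ν`. In both cases `μ̂ = c μ` with `0 ≤ c ≤ 1`, which preserves `min(-h, μ̂) → 0`.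
-/

lemma abs_le_sqrt_sum_sq {ι : Type*} [Fintype ι] (v : ι → ℝ) (j : ι) :
    |v j| ≤ √(∑ i, v i ^ 2) :=
  Real.abs_le_sqrt (single_le_sum (fun i _ => sq_nonneg (v i)) (mem_univ j))

lemma abs_min_mul_le_abs_min {a b c : ℝ} (hc0 : 0 ≤ c) (hc1 : c ≤ 1) :
    |min a (c * b)| ≤ |min a b| := by
  have hcb : 0 ≤ b ∧ c * b ≤ b ∨ b ≤ 0 ∧ b ≤ c * b := by
    rcases le_total 0 b with hb | hb
    · exact .inl ⟨hb, mul_le_of_le_one_left hb hc1⟩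
    · exact .inr ⟨hb, by nlinarith⟩
  rw [abs_le]
  constructor <;> cases min_cases a (c * b) <;> cases min_cases a b <;>
    cases abs_cases (min a b) <;> rcases hcb with hcb | hcb <;> nlinarith

lemma abs_two_mul_max_zero_sub_le {a u ρ : ℝ} (hρ : 0 < ρ) :
    |2 * max a 0 - 2 / ρ * max (u + ρ * a) 0| ≤ 2 * |u| / ρ := by
  have hscale : 2 / ρ * max (u + ρ * a) 0 = max (2 * a + 2 * u / ρ) 0 := by
    rw [mul_max_of_nonneg _ _ (by positivity), mul_zero]
    field_simp
    ring_nf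
  calc |2 * max a 0 - 2 / ρ * max (u + ρ * a) 0|
      = |max (2 * a) 0 - max (2 * a + 2 * u / ρ) 0| := by
        rw [hscale, mul_max_of_nonneg _ _ zero_le_two, mul_zero]
    _ ≤ |2 * a - (2 * a + 2 * u / ρ)| := abs_max_sub_max_le_abs _ _ _
    _ = 2 * |u| / ρ := by
        rw [sub_add_cancel_left, abs_neg, abs_div, abs_mul, abs_two, abs_of_pos hρ]

lemma hasDerivAt_max_zero_sq (t : ℝ) :
    HasDerivAt (fun s : ℝ => max s 0 ^ 2) (2 * max t 0) t := by
  rcases lt_trichotomy t 0 with ht | rfl | ht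
  · have hloc : (fun s : ℝ => max s 0 ^ 2) =ᶠ[𝓝 t] fun _ => 0 := by
      filter_upwards [gt_mem_nhds ht] with s hs
      simp [hs.le]
    simpa [ht.le] using (hasDerivAt_const t (0 : ℝ)).congr_of_eventuallyEq hloc
  · rw [hasDerivAt_iff_isLittleO_nhds_zero]
    simp only [zero_add, max_self, ne_eq, OfNat.ofNat_ne_zero, not_false_eq_true, zero_pow,
      sub_zero, mul_zero, smul_zero]
    refine (Asymptotics.IsBigO.of_bound 1 (Eventually.of_forall fun s => ?_)).trans_isLittleO
      (Asymptotics.isLittleO_pow_id one_lt_two)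
    rw [one_mul, Real.norm_of_nonneg (by positivity), Real.norm_of_nonneg (sq_nonneg s)]
    rcases le_total s 0 with hs | hs <;> simp [hs, sq_nonneg]
  · have hloc : (fun s : ℝ => max s 0 ^ 2) =ᶠ[𝓝 t] fun s => s ^ 2 := by
      filter_upwards [lt_mem_nhds ht] with s hs
      simp [hs.le]
    simpa [ht.le] using (hasDerivAt_pow 2 t).congr_of_eventuallyEq hloc

section Sequences

variable {α : Type*} {l : Filter α}

lemma tendsto_min_mul_of_tendsto_min {a b c : α → ℝ}
    (hab : Tendsto (fun k => min (a k) (b k)) l (𝓝 0))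
    (hc : ∀ᶠ k in l, c k ∈ Set.Icc 0 1) :
    Tendsto (fun k => min (a k) (c k * b k)) l (𝓝 0) := by
  refine squeeze_zero_norm' ?_ (tendsto_zero_iff_norm_tendsto_zero.mp hab)
  filter_upwards [hc] with k hk
  exact abs_min_mul_le_abs_min hk.1 hk.2

lemma tendsto_max_zero_of_tendsto_min {a b : α → ℝ}
    (h : Tendsto (fun k => min (-a k) (b k)) l (𝓝 0)) :
    Tendsto (fun k => max (a k) 0) l (𝓝 0) := by
  refine squeeze_zero_norm (fun k => ?_) (tendsto_zero_iff_norm_tendsto_zero.mp h)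
  rw [Real.norm_of_nonneg (le_max_right _ _), Real.norm_eq_abs]
  exact max_le (by linarith [min_le_left (-a k) (b k), neg_abs_le (min (-a k) (b k))])
    (abs_nonneg _)

lemma tendsto_apply_of_tendsto_sqrt_sum_sq {ι : Type*} [Fintype ι] {v : α → ι → ℝ}
    (h : Tendsto (fun k => √(∑ i, v k i ^ 2)) l (𝓝 0)) (i : ι) :
    Tendsto (fun k => v k i) l (𝓝 0) :=
  squeeze_zero_norm (fun k => abs_le_sqrt_sum_sq (v k) i) h

lemma tendsto_two_mul_max_zero_sub {a u ρ : α → ℝ} {U : ℝ} (hu : ∀ k, |u k| ≤ U)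
    (hρ : Tendsto ρ l atTop) :
    Tendsto (fun k => 2 * max (a k) 0 - 2 / ρ k * max (u k + ρ k * a k) 0) l (𝓝 0) := by
  refine squeeze_zero_norm' ?_
    (tendsto_const_nhds.div_atTop hρ : Tendsto (fun k => 2 * U / ρ k) l _)
  filter_upwards [hρ.eventually_gt_atTop 0] with k hk
  exact (abs_two_mul_max_zero_sub_le hk).trans (by gcongr; exact hu k)

end Sequences

lemma mem_Icc_of_eq_min {u lam : ℕ → ℝ} {umax : ℝ} (humax : 0 ≤ umax)
    (hu0 : u 0 ∈ Set.Icc 0 umax) (hlam : ∀ k, 0 ≤ lam (k + 1))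
    (hu : ∀ k, u (k + 1) = min (lam (k + 1)) umax) (k : ℕ) : u k ∈ Set.Icc 0 umax := by
  cases k with
  | zero => exact hu0
  | succ k => exact hu k ▸ ⟨le_min (hlam k) humax, min_le_right _ _⟩

lemma tendsto_atTop_of_frequently_eq_mul {ρ : ℕ → ℝ} {γ : ℝ} (hmono : Monotone ρ)
    (hρ0 : 0 < ρ 0) (hγ : 1 < γ) (hfreq : ∃ᶠ k in atTop, ρ (k + 1) = γ * ρ k) :
    Tendsto ρ atTop atTop := by
  have hgrow : ∀ j : ℕ, ∃ k, ρ 0 * γ ^ j ≤ ρ k := by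
    intro j
    induction j with
    | zero => exact ⟨0, by simp⟩
    | succ j ih =>
      obtain ⟨k, hk⟩ := ih
      obtain ⟨k', hkk', hk'⟩ := frequently_atTop.mp hfreq k
      refine ⟨k' + 1, ?_⟩
      rw [hk', pow_succ, ← mul_assoc, mul_comm _ γ]
      exact mul_le_mul_of_nonneg_left (hk.trans (hmono hkk')) (by linarith)
  refine tendsto_atTop_atTop_of_monotone hmono fun b => ?_
  obtain ⟨j, hj⟩ :=
    (((tendsto_pow_atTop_atTop_of_one_lt hγ).const_mul_atTop hρ0).eventually_ge_atTop b).exists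
  obtain ⟨k, hk⟩ := hgrow j
  exact ⟨k, hj.trans hk⟩

lemma tendsto_zero_or_tendsto_atTop_of_penalty_update {V ρ : ℕ → ℝ} {τ γ : ℝ}
    (hV : ∀ k, 0 ≤ V k) (hτ : τ < 1) (hγ : 1 < γ) (hρ0 : 0 < ρ 0)
    (hρ : ∀ k, (V (k + 1) ≤ τ * V k → ρ (k + 1) = ρ k) ∧
      (¬ V (k + 1) ≤ τ * V k → ρ (k + 1) = γ * ρ k)) :
    Tendsto V atTop (𝓝 0) ∨ Tendsto ρ atTop atTop := by
  by_cases hcontr : ∀ᶠ k in atTop, V (k + 1) ≤ τ * V k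
  · left
    refine (summable_of_ratio_norm_eventually_le hτ ?_).tendsto_atTop_zero
    simpa only [Real.norm_of_nonneg (hV _)] using hcontr
  · right
    have hstep : ∀ k, ρ (k + 1) = ρ k ∨ ρ (k + 1) = γ * ρ k := fun k => by
      by_cases hk : V (k + 1) ≤ τ * V k
      exacts [.inl ((hρ k).1 hk), .inr ((hρ k).2 hk)]
    have hpos : ∀ k, 0 < ρ k := fun k => by
      induction k with
      | zero => exact hρ0
      | succ k ih => rcases hstep k with h | h <;> rw [h] <;> positivity
    refine tendsto_atTop_of_frequently_eq_mul (monotone_nat_of_le_succ fun k => ?_) hρ0 hγ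
      ((not_eventually.mp hcontr).mono fun k hk => (hρ k).2 hk)
    rcases hstep k with h | h <;> rw [h]
    exact le_mul_of_one_le_left (hpos k).le hγ.le

lemma exists_penalty_scaling {ι : Type*} [Fintype ι] {G lam u : ℕ → ι → ℝ} {ρ : ℕ → ℝ}
    {umax τ γ : ℝ} {φ : ℕ → ℕ} (hφ : Tendsto φ atTop atTop) (humax : 0 ≤ umax) (hτ : τ < 1)
    (hγ : 1 < γ) (hρ0 : 0 < ρ 0) (hu0 : ∀ i, u 0 i ∈ Set.Icc 0 umax)
    (hlam : ∀ k i, lam (k + 1) i = max (u k i + ρ k * G (k + 1) i) 0)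
    (hu : ∀ k i, u (k + 1) i = min (lam (k + 1) i) umax)
    (hρ : ∀ k,
      (√(∑ i, min (-G (k + 1) i) (lam (k + 1) i) ^ 2) ≤ τ * √(∑ i, min (-G k i) (lam k i) ^ 2) →
        ρ (k + 1) = ρ k) ∧
      (¬ √(∑ i, min (-G (k + 1) i) (lam (k + 1) i) ^ 2) ≤ τ * √(∑ i, min (-G k i) (lam k i) ^ 2) →
        ρ (k + 1) = γ * ρ k)) :
    ∃ c : ℕ → ℝ, Tendsto c atTop (𝓝 0) ∧ (∀ᶠ k in atTop, c k ∈ Set.Icc 0 1) ∧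
      ∀ i, Tendsto (fun k => 2 * max (G (φ k + 1) i) 0
        - c k * max (u (φ k) i + ρ (φ k) * G (φ k + 1) i) 0) atTop (𝓝 0) := by
  rcases tendsto_zero_or_tendsto_atTop_of_penalty_update
    (V := fun k => √(∑ i, min (-G k i) (lam k i) ^ 2)) (fun k => Real.sqrt_nonneg _) hτ hγ hρ0
    hρ with hV | hρ
  · refine ⟨0, tendsto_const_nhds, .of_forall fun _ => ⟨le_rfl, zero_le_one⟩, fun i => ?_⟩
    simpa using (tendsto_max_zero_of_tendsto_min ((tendsto_apply_of_tendsto_sqrt_sum_sq hV i).comp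
      ((tendsto_add_atTop_nat 1).comp hφ))).const_mul 2
  · have hρφ := hρ.comp hφ
    refine ⟨fun k => 2 / ρ (φ k), tendsto_const_nhds.div_atTop hρφ, ?_,
      fun i => tendsto_two_mul_max_zero_sub (U := umax) (fun k => ?_) hρφ⟩
    · filter_upwards [hρφ.eventually_ge_atTop 2] with k (hk : 2 ≤ ρ (φ k))
      exact ⟨by positivity, (div_le_one (by linarith)).mpr hk⟩
    · have hk := mem_Icc_of_eq_min (u := (u · i)) (lam := (lam · i)) humax (hu0 i)
        (fun k => (hlam k i).symm ▸ le_max_right _ _) (hu · i) (φ k)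
      exact (abs_of_nonneg hk.1).trans_le hk.2

lemma tendsto_sum_smul_add_sum_mul_smul {α ι κ E : Type*} [NormedAddCommGroup E]
    [NormedSpace ℝ E] [Fintype ι] [Fintype κ] {l : Filter α} {c : α → ℝ} {a : α → E}
    {G : α → ι → E} {H : α → κ → E} {s t : α → ι → ℝ} {μ : α → κ → ℝ}
    (hc : Tendsto c l (𝓝 0))
    (hW : IsBoundedUnder (· ≤ ·) l fun k => ‖a k + ∑ i, t k i • G k i + ∑ j, μ k j • H k j‖)
    (ha : IsBoundedUnder (· ≤ ·) l fun k => ‖a k‖)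
    (hG : ∀ i, IsBoundedUnder (· ≤ ·) l fun k => ‖G k i‖)
    (hst : ∀ i, Tendsto (fun k => s k i - c k * t k i) l (𝓝 0)) :
    Tendsto (fun k => ∑ i, s k i • G k i + ∑ j, (c k * μ k j) • H k j) l (𝓝 0) := by
  -- the combination equals `c • W - c • a + ∑ i, (s - c t) • G` with `W` the bounded residual
  have hlim := ((hc.zero_smul_isBoundedUnder_le hW).sub (hc.zero_smul_isBoundedUnder_le ha)).add
    (tendsto_finsetSum univ fun i _ => (hst i).zero_smul_isBoundedUnder_le (hG i))
  convert hlim using 2 with k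
  · simp only [smul_add, smul_sum, smul_smul, sub_smul, sum_sub_distrib]
    abel
  · simp

section PartialGradient

variable {N : ℕ} {n : Fin N → ℕ}

lemma pgrad_eq_toDual_symm (ν : Fin N) {f : Strat n → ℝ} {y : Strat n}
    (hf : DifferentiableAt ℝ f y) :
    pgrad ν f y = (InnerProductSpace.toDual ℝ _).symm
      ((fderiv ℝ f y).comp (.pi (Pi.single ν (.id ℝ (EuclideanSpace ℝ (Fin (n ν))))))) := by
  have hcomp := (update_eq_self ν y ▸ hf).hasFDerivAt.comp (y ν) (hasFDerivAt_update y (y ν))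
  rw [update_eq_self] at hcomp
  exact congrArg _ hcomp.fderiv

lemma continuous_pgrad (ν : Fin N) {f : Strat n → ℝ} (hf : ContDiff ℝ 1 f) :
    Continuous (pgrad ν f) := by
  have hdiff := hf.differentiable one_ne_zero
  rw [show pgrad ν f = _ from funext fun y => pgrad_eq_toDual_symm ν (hdiff y)]
  exact (LinearIsometryEquiv.continuous _).comp
    ((hf.continuous_fderiv one_ne_zero).clm_comp continuous_const)

lemma pgrad_sum_comp (ν : Fin N) {ι : Type*} [Fintype ι] {f f' : ℝ → ℝ}
    (hf : ∀ t, HasDerivAt f (f' t) t) {c : ι → Strat n → ℝ} {x : Strat n}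
    (hc : ∀ i, DifferentiableAt ℝ (c i) x) :
    pgrad ν (fun y => ∑ i, f (c i y)) x = ∑ i, f' (c i x) • pgrad ν (c i) x := by
  have hgrad : ∀ i, HasGradientAt (fun z => c i (update x ν z)) (pgrad ν (c i) x) (x ν) :=
    fun i => DifferentiableAt.hasGradientAt <|
      (update_eq_self ν x ▸ hc i).comp (x ν) (hasFDerivAt_update x (x ν)).differentiableAt
  refine HasGradientAt.gradient (hasGradientAt_iff_hasFDerivAt.mpr ?_)
  have hsum := HasFDerivAt.fun_sum fun i (_ : i ∈ univ) =>
    (hf _).comp_hasFDerivAt (x ν) (hasGradientAt_iff_hasFDerivAt.mp (hgrad i))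
  simpa [update_eq_self] using hsum

end PartialGradient

theorem stmt9_general {N : ℕ} {n m p : Fin N → ℕ}
    (θ : Fin N → Strat n → ℝ)
    (g : (ν : Fin N) → Fin (m ν) → Strat n → ℝ)
    (h : (ν : Fin N) → Fin (p ν) → Strat n → ℝ)
    (hθ : ∀ ν, ContDiff ℝ 1 (θ ν))
    (hg : ∀ ν i, ContDiff ℝ 1 (g ν i))
    (x : ℕ → Strat n)
    (lam : (k : ℕ) → (ν : Fin N) → Fin (m ν) → ℝ)
    (mu : (k : ℕ) → (ν : Fin N) → Fin (p ν) → ℝ)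
    (u : (k : ℕ) → (ν : Fin N) → Fin (m ν) → ℝ)
    (rho : ℕ → Fin N → ℝ)
    (umax : ℝ) (τ γ : Fin N → ℝ)
    (humax : 0 ≤ umax)
    (hτ : ∀ ν, τ ν ∈ Set.Ioo (0:ℝ) 1)
    (hγ : ∀ ν, 1 < γ ν)
    (hrho0 : ∀ ν, 0 < rho 0 ν)
    (hu0 : ∀ ν i, u 0 ν i ∈ Set.Icc 0 umax)
    (hlam : ∀ k ν i, lam (k+1) ν i = max (u k ν i + rho k ν * g ν i (x (k+1))) 0)
    (hu : ∀ k ν i, u (k+1) ν i = min (lam (k+1) ν i) umax)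
    (hrho : ∀ k ν,
      (Real.sqrt (∑ i, (min (-(g ν i (x (k+1)))) (lam (k+1) ν i)) ^ 2) ≤
          τ ν * Real.sqrt (∑ i, (min (-(g ν i (x k))) (lam k ν i)) ^ 2) →
        rho (k+1) ν = rho k ν) ∧
      (¬ (Real.sqrt (∑ i, (min (-(g ν i (x (k+1)))) (lam (k+1) ν i)) ^ 2) ≤
          τ ν * Real.sqrt (∑ i, (min (-(g ν i (x k))) (lam k ν i)) ^ 2)) →
        rho (k+1) ν = γ ν * rho k ν))
    (eps eps' : ℕ → ℝ)
    (heps' : Tendsto eps' atTop (𝓝 0))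
    (hA1 : ∀ k ν, ‖pgrad ν (θ ν) (x (k+1))
        + ∑ i, max (u k ν i + rho k ν * g ν i (x (k+1))) 0 • pgrad ν (g ν i) (x (k+1))
        + ∑ j, mu (k+1) ν j • pgrad ν (h ν j) (x (k+1))‖ ≤ eps k)
    (hA2 : ∀ k ν, Real.sqrt (∑ j, (min (-(h ν j (x (k+1)))) (mu (k+1) ν j)) ^ 2) ≤ eps' k)
    (hepsbd : ∃ M, ∀ k, eps k ≤ M)
    (φ : ℕ → ℕ) (hφ : StrictMono φ) (xbar : Strat n)
    (hxconv : Tendsto (fun k => x (φ k + 1)) atTop (𝓝 xbar)) :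
    ∀ ν, ∃ muhat : ℕ → Fin (p ν) → ℝ,
      Tendsto (fun k => pgrad ν (fun y => ∑ i, max (g ν i y) 0 ^ 2) (x (φ k + 1))
          + ∑ j, muhat k j • pgrad ν (h ν j) (x (φ k + 1))) atTop (𝓝 0) ∧
      ∀ j, Tendsto (fun k => min (-(h ν j (x (φ k + 1)))) (muhat k j)) atTop (𝓝 0) := by
  intro ν
  have hbdd : ∀ f : Strat n → ℝ, ContDiff ℝ 1 f →
      IsBoundedUnder (· ≤ ·) atTop fun k => ‖pgrad ν f (x (φ k + 1))‖ := fun f hf =>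
    (((continuous_pgrad ν hf).tendsto xbar).comp hxconv).norm.isBoundedUnder_le
  have hcompl : ∀ j, Tendsto (fun k => min (-(h ν j (x (φ k + 1)))) (mu (φ k + 1) ν j))
      atTop (𝓝 0) := fun j =>
    (tendsto_apply_of_tendsto_sqrt_sum_sq
      (squeeze_zero (fun _ => Real.sqrt_nonneg _) (hA2 · ν) heps') j).comp hφ.tendsto_atTop
  obtain ⟨c, hc, hc01, hst⟩ := exists_penalty_scaling (G := fun k i => g ν i (x k))
    (lam := (lam · ν)) (u := (u · ν)) (ρ := (rho · ν)) hφ.tendsto_atTop humax (hτ ν).2 (hγ ν)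
    (hrho0 ν) (hu0 ν) (hlam · ν) (hu · ν) (hrho · ν)
  refine ⟨fun k j => c k * mu (φ k + 1) ν j, ?_,
    fun j => tendsto_min_mul_of_tendsto_min (hcompl j) hc01⟩
  obtain ⟨M, hM⟩ := hepsbd
  simp_rw [pgrad_sum_comp ν hasDerivAt_max_zero_sq fun i => (hg ν i).differentiable one_ne_zero _]
  exact tendsto_sum_smul_add_sum_mul_smul hc
    (isBoundedUnder_of ⟨M, fun k => (hA1 (φ k) ν).trans (hM _)⟩) (hbdd _ (hθ ν))
    (fun i => hbdd _ (hg ν i)) hst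

/-- **Lemma 4.1.** Along any convergent subsequence of the iterates of the
augmented Lagrangian method, there exist multipliers satisfying an approximate KKT condition
of the Feasibility GNEP. -/
theorem stmt9 {N : ℕ} {n m p : Fin N → ℕ}
    (θ : Fin N → Strat n → ℝ)
    (g : (ν : Fin N) → Fin (m ν) → Strat n → ℝ)
    (h : (ν : Fin N) → Fin (p ν) → Strat n → ℝ)
    (hθ : ∀ ν, ContDiff ℝ 1 (θ ν))
    (hg : ∀ ν i, ContDiff ℝ 1 (g ν i))
    (hh : ∀ ν j, ContDiff ℝ 1 (h ν j))
    (x : ℕ → Strat n)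
    (lam : (k : ℕ) → (ν : Fin N) → Fin (m ν) → ℝ)
    (mu : (k : ℕ) → (ν : Fin N) → Fin (p ν) → ℝ)
    (u : (k : ℕ) → (ν : Fin N) → Fin (m ν) → ℝ)
    (rho : ℕ → Fin N → ℝ)
    (umax : ℝ) (τ γ : Fin N → ℝ)
    (humax : 0 ≤ umax)
    (hτ : ∀ ν, τ ν ∈ Set.Ioo (0:ℝ) 1)
    (hγ : ∀ ν, 1 < γ ν)
    (hrho0 : ∀ ν, 0 < rho 0 ν)
    (hu0 : ∀ ν i, u 0 ν i ∈ Set.Icc 0 umax)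
    (hlam : ∀ k ν i, lam (k+1) ν i = max (u k ν i + rho k ν * g ν i (x (k+1))) 0)
    (hu : ∀ k ν i, u (k+1) ν i = min (lam (k+1) ν i) umax)
    (hrho : ∀ k ν,
      (Real.sqrt (∑ i, (min (-(g ν i (x (k+1)))) (lam (k+1) ν i)) ^ 2) ≤
          τ ν * Real.sqrt (∑ i, (min (-(g ν i (x k))) (lam k ν i)) ^ 2) →
        rho (k+1) ν = rho k ν) ∧
      (¬ (Real.sqrt (∑ i, (min (-(g ν i (x (k+1)))) (lam (k+1) ν i)) ^ 2) ≤
          τ ν * Real.sqrt (∑ i, (min (-(g ν i (x k))) (lam k ν i)) ^ 2)) →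
        rho (k+1) ν = γ ν * rho k ν))
    (eps eps' : ℕ → ℝ)
    (heps0 : ∀ k, 0 ≤ eps k)
    (heps'0 : ∀ k, 0 ≤ eps' k)
    (heps' : Tendsto eps' atTop (𝓝 0))
    (hA1 : ∀ k ν, ‖pgrad ν (θ ν) (x (k+1))
        + ∑ i, max (u k ν i + rho k ν * g ν i (x (k+1))) 0 • pgrad ν (g ν i) (x (k+1))
        + ∑ j, mu (k+1) ν j • pgrad ν (h ν j) (x (k+1))‖ ≤ eps k)
    (hA2 : ∀ k ν, Real.sqrt (∑ j, (min (-(h ν j (x (k+1)))) (mu (k+1) ν j)) ^ 2) ≤ eps' k)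
    (hepsbd : ∃ M, ∀ k, eps k ≤ M)
    (φ : ℕ → ℕ) (hφ : StrictMono φ) (xbar : Strat n)
    (hxconv : Tendsto (fun k => x (φ k + 1)) atTop (𝓝 xbar)) :
    ∀ ν, ∃ muhat : ℕ → Fin (p ν) → ℝ,
      Tendsto (fun k => pgrad ν (fun y => ∑ i, max (g ν i y) 0 ^ 2) (x (φ k + 1))
          + ∑ j, muhat k j • pgrad ν (h ν j) (x (φ k + 1))) atTop (𝓝 0) ∧
      ∀ j, Tendsto (fun k => min (-(h ν j (x (φ k + 1)))) (muhat k j)) atTop (𝓝 0) :=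
  stmt9_general θ g h hθ hg x lam mu u rho umax τ γ humax hτ hγ hrho0 hu0 hlam hu hrho eps eps'
    heps' hA1 hA2 hepsbd φ hφ xbar hxconv
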